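/- arXiv:1706.03403 — 11 statements merged into one kernel-verified Lean document; each statement's English description precedes it below -/
import Mathlib

section
/- Let $c>0$, $\tau\ge 0$, $a_+<0$, $b_+>0$ with $a_++b_+<0$. Then the function $\chi_+(z)=z^2-cz+a_++b_+e^{-zc\tau}$ has exactly two real zeros, one negative and one positive. -/
/-!
`χ₊` is a strictly convex function of `z` (a parabola plus a nonnegative multiple of an
exponential), so it has at most two real zeros. It is negative at `0`, since `χ₊(0) = a₊ + b₊`,
and positive far out on either side, since it dominates the parabola `z² - cz + a₊`; by the
intermediate value theorem it has a zero on each side of `0`.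
-/

open Set Real

theorem StrictConvexOn.eq_or_eq_of_apply_eq {f : ℝ → ℝ} (hf : StrictConvexOn ℝ univ f)
    {x y z v : ℝ} (hxy : x < y) (hx : f x = v) (hy : f y = v) (hz : f z = v) :
    z = x ∨ z = y := by
  have no_middle : ∀ {p q r : ℝ}, p < q → q < r → f p = v → f q = v → f r = v → False :=
    fun hpq hqr hp hq hr => by
      have := hf.lt_on_openSegment (mem_univ _) (mem_univ _) (hpq.trans hqr).ne
        (Ioo_subset_openSegment ⟨hpq, hqr⟩)
      rw [hp, hq, hr, max_self] at this
      exact this.false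
  by_contra! hne
  rcases hne.1.lt_or_gt with hzx | hxz
  · exact no_middle hzx hxy hz hx hy
  rcases hne.2.lt_or_gt with hzy | hyz
  · exact no_middle hxz hzy hx hz hy
  · exact no_middle hxy hyz hx hy hz

/-- `χ₊(x)`, with the delay entering only through `k = cτ`. -/
noncomputable def chiPlus (c k a b x : ℝ) : ℝ :=
  x ^ 2 - c * x + a + b * exp (-(x * k))

theorem chiPlus_neg (c k a b x : ℝ) : chiPlus c k a b (-x) = chiPlus (-c) (-k) a b x := by
  simp only [chiPlus]
  ring_nf

theorem continuous_chiPlus (c k a b : ℝ) : Continuous (chiPlus c k a b) := by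
  unfold chiPlus
  fun_prop

theorem strictConvexOn_chiPlus (c k a : ℝ) {b : ℝ} (hb : 0 ≤ b) :
    StrictConvexOn ℝ univ (chiPlus c k a b) := by
  have hlin : ConvexOn ℝ univ fun x : ℝ => -c * x + a :=
    ((LinearMap.mul ℝ ℝ (-c)).convexOn convex_univ).add_const a
  have hexp : ConvexOn ℝ univ fun x : ℝ => b * exp (-k * x) :=
    (convexOn_exp.comp_linearMap (LinearMap.mul ℝ ℝ (-k))).smul hb
  refine ((Even.strictConvexOn_pow even_two two_ne_zero).add_convexOn (hlin.add hexp)).congr ?_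
  intro x _
  simp only [chiPlus, Pi.add_apply]
  ring_nf

theorem exists_pos_chiPlus_eq_zero (c k : ℝ) {a b : ℝ} (hb : 0 < b) (hab : a + b < 0) :
    ∃ x, 0 < x ∧ chiPlus c k a b x = 0 := by
  set R := |c| + |a| + 1
  have hR : 0 < R := by positivity
  have hf0 : chiPlus c k a b 0 < 0 := by
    simpa [chiPlus] using hab
  -- `R² - cR + a ≥ R (R - |c|) + a = R (|a| + 1) + a > 0`, and the exponential term is positive.
  have hfR : 0 < chiPlus c k a b R := by
    have := mul_pos hb (exp_pos (-(R * k)))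
    simp only [chiPlus]
    nlinarith [abs_nonneg c, abs_nonneg a, le_abs_self c, neg_abs_le a]
  obtain ⟨x, hx, hfx⟩ :=
    intermediate_value_Ioo hR.le (continuous_chiPlus c k a b).continuousOn ⟨hf0, hfR⟩
  exact ⟨x, hx.1, hfx⟩

theorem chi_plus_two_real_zeros_general (c τ a b : ℝ) (hb : 0 < b) (hab : a + b < 0) :
    ∃ μ₂ μ₁ : ℝ, μ₂ < 0 ∧ 0 < μ₁ ∧
      μ₂ ^ 2 - c * μ₂ + a + b * Real.exp (-(μ₂ * (c * τ))) = 0 ∧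
      μ₁ ^ 2 - c * μ₁ + a + b * Real.exp (-(μ₁ * (c * τ))) = 0 ∧
      ∀ x : ℝ, x ^ 2 - c * x + a + b * Real.exp (-(x * (c * τ))) = 0 →
        x = μ₂ ∨ x = μ₁ := by
  obtain ⟨μ₁, hμ₁, hχμ₁⟩ := exists_pos_chiPlus_eq_zero c (c * τ) hb hab
  obtain ⟨ν, hν, hχν⟩ := exists_pos_chiPlus_eq_zero (-c) (-(c * τ)) hb hab
  have hχμ₂ : chiPlus c (c * τ) a b (-ν) = 0 := by rwa [chiPlus_neg]
  refine ⟨-ν, μ₁, neg_neg_of_pos hν, hμ₁, hχμ₂, hχμ₁, fun x hx => ?_⟩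
  exact (strictConvexOn_chiPlus c (c * τ) a hb.le).eq_or_eq_of_apply_eq
    (by linarith) hχμ₂ hχμ₁ hx

/-- The characteristic function `χ₊(z) = z² - cz + a₊ + b₊ e^{-z c τ}` with
`c > 0`, `τ ≥ 0`, `a₊ < 0`, `b₊ > 0`, `a₊ + b₊ < 0` has exactly two real zeros,
one negative and one positive. -/
theorem chi_plus_two_real_zeros (c τ a b : ℝ) (hc : 0 < c) (hτ : 0 ≤ τ)
    (ha : a < 0) (hb : 0 < b) (hab : a + b < 0) :
    ∃ μ₂ μ₁ : ℝ, μ₂ < 0 ∧ 0 < μ₁ ∧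
      μ₂ ^ 2 - c * μ₂ + a + b * Real.exp (-(μ₂ * (c * τ))) = 0 ∧
      μ₁ ^ 2 - c * μ₁ + a + b * Real.exp (-(μ₁ * (c * τ))) = 0 ∧
      ∀ x : ℝ, x ^ 2 - c * x + a + b * Real.exp (-(x * (c * τ))) = 0 →
        x = μ₂ ∨ x = μ₁ :=
  chi_plus_two_real_zeros_general c τ a b hb hab
end

section
/- Let $c>0$, $\tau\ge 0$, $a_+<0$, $b_+>0$ with $a_++b_+<0$, and let $\mu_2<0<\mu_1$ be the real zeros of $\chi_+(z)=z^2-cz+a_++b_+e^{-zc\tau}$. Then every complex zero $w$ of $\chi_+$ satisfies $\mathrm{Re}\,w\notin[\mu_2,\mu_1]$ unless $w\in\{\mu_1,\mu_2\}$; in particular $\mu_1,\mu_2$ are the only zeros of $\chi_+$ in the strip $\{\mu_2\le\mathrm{Re}\,z\le\mu_1\}$. -/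
/-!
On the real line `f x = x ^ 2 - c x + a + b e^{-x c τ}` is strictly convex, so it is `≤ 0` on
`[μ₂, μ₁]` and vanishes there only at the endpoints. For a zero `w = x + i y` of `χ₊`, taking real
parts in `w ^ 2 - c w + a = -b e^{-w c τ}` and bounding the right-hand side by its modulus
`b e^{-x c τ}` gives `y ^ 2 ≤ f x`. In the strip this forces `y = 0` and `f x = 0`.
-/

open Set Real

theorem StrictConvexOn.eq_or_eq_of_max_le_of_mem_Icc {𝕜 β : Type*} [Field 𝕜] [LinearOrder 𝕜]
    [IsStrictOrderedRing 𝕜] [AddCommMonoid β] [LinearOrder β] [IsOrderedAddMonoid β]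
    [Module 𝕜 β] [PosSMulStrictMono 𝕜 β] {s : Set 𝕜} {f : 𝕜 → β} {x y z : 𝕜}
    (hf : StrictConvexOn 𝕜 s f) (hx : x ∈ s) (hy : y ∈ s) (hz : z ∈ Icc x y)
    (hmax : max (f x) (f y) ≤ f z) : z = x ∨ z = y := by
  by_contra! hne
  have hz' : z ∈ Ioo x y := ⟨hz.1.lt_of_ne hne.1.symm, hz.2.lt_of_ne hne.2⟩
  have hxy : x < y := hz'.1.trans hz'.2
  rw [← openSegment_eq_Ioo hxy] at hz'
  exact (hf.lt_on_openSegment hx hy hxy.ne hz').not_ge hmax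

theorem strictConvexOn_quadratic_add_exp (c a b k : ℝ) (hb : 0 ≤ b) :
    StrictConvexOn ℝ univ fun x : ℝ ↦ x ^ 2 - c * x + a + b * exp (-(x * k)) := by
  have hexp : ConvexOn ℝ univ fun x : ℝ ↦ b • (exp ∘ LinearMap.mul ℝ ℝ (-k)) x :=
    (convexOn_exp.comp_linearMap (LinearMap.mul ℝ ℝ (-k))).smul hb
  have hlin := (LinearMap.mul ℝ ℝ (-c)).convexOn convex_univ
  refine ((Even.strictConvexOn_pow even_two two_ne_zero).add_convexOn
    ((hlin.add hexp).add_const a)).congr fun x _ ↦ ?_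
  simp only [Pi.add_apply, Function.comp_apply, LinearMap.mul_apply', smul_eq_mul]
  rw [show -k * x = -(x * k) by ring]
  ring

theorem im_sq_le_of_quadratic_add_exp_eq_zero {c a b k : ℝ} (hb : 0 ≤ b) {w : ℂ}
    (hw : w ^ 2 - c * w + a + b * Complex.exp (-(w * k)) = 0) :
    w.im ^ 2 ≤ w.re ^ 2 - c * w.re + a + b * exp (-(w.re * k)) := by
  have hnorm : ‖w ^ 2 - c * w + a‖ = b * exp (-(w.re * k)) := by
    rw [show w ^ 2 - c * w + a = -(b * Complex.exp (-(w * k))) by linear_combination hw,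
      norm_neg, norm_mul, Complex.norm_exp, Complex.norm_real, Real.norm_of_nonneg hb]
    simp
  have hre : (w ^ 2 - c * w + a).re = w.re ^ 2 - w.im ^ 2 - c * w.re + a := by
    simp [sq]
  have hre_ge := neg_le_of_abs_le (Complex.abs_re_le_norm (w ^ 2 - c * w + a))
  rw [hnorm, hre] at hre_ge
  linarith

theorem chi_plus_only_zeros_in_strip_general (c τ a b μ₁ μ₂ : ℝ) (hb : 0 < b)
    (hzero₂ : μ₂ ^ 2 - c * μ₂ + a + b * Real.exp (-(μ₂ * (c * τ))) = 0)
    (hzero₁ : μ₁ ^ 2 - c * μ₁ + a + b * Real.exp (-(μ₁ * (c * τ))) = 0) :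
    ∀ w : ℂ, w ^ 2 - (c : ℂ) * w + (a : ℂ) +
        (b : ℂ) * Complex.exp (-(w * ((c : ℂ) * (τ : ℂ)))) = 0 →
      μ₂ ≤ w.re → w.re ≤ μ₁ → w = (μ₂ : ℂ) ∨ w = (μ₁ : ℂ) := by
  intro w hw hμ₂ hμ₁
  have hf := strictConvexOn_quadratic_add_exp c a b (c * τ) hb.le
  have hmem : w.re ∈ Icc μ₂ μ₁ := ⟨hμ₂, hμ₁⟩
  have hnonpos := hf.convexOn.le_max_of_mem_Icc trivial trivial hmem
  rw [hzero₂, hzero₁, max_self] at hnonpos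
  have him := im_sq_le_of_quadratic_add_exp_eq_zero (k := c * τ) hb.le (by push_cast; exact hw)
  have him_eq : w.im = 0 :=
    pow_eq_zero_iff two_ne_zero |>.1 <| (him.trans hnonpos).antisymm (sq_nonneg _)
  have hre := hf.eq_or_eq_of_max_le_of_mem_Icc trivial trivial hmem <| by
    rw [hzero₂, hzero₁, max_self]
    exact (sq_nonneg _).trans him
  rcases hre with hre | hre
  · exact .inl (Complex.ext (by simp [hre]) (by simp [him_eq]))
  · exact .inr (Complex.ext (by simp [hre]) (by simp [him_eq]))

/-- The real zeros `μ₂ < 0 < μ₁` of `χ₊` are its only zeros in the complex strip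
`{μ₂ ≤ Re z ≤ μ₁}`. -/
theorem chi_plus_only_zeros_in_strip (c τ a b μ₁ μ₂ : ℝ) (hc : 0 < c) (hτ : 0 ≤ τ)
    (ha : a < 0) (hb : 0 < b) (hab : a + b < 0)
    (hμ₂neg : μ₂ < 0) (hμ₁pos : 0 < μ₁)
    (hzero₂ : μ₂ ^ 2 - c * μ₂ + a + b * Real.exp (-(μ₂ * (c * τ))) = 0)
    (hzero₁ : μ₁ ^ 2 - c * μ₁ + a + b * Real.exp (-(μ₁ * (c * τ))) = 0) :
    ∀ w : ℂ, w ^ 2 - (c : ℂ) * w + (a : ℂ) +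
        (b : ℂ) * Complex.exp (-(w * ((c : ℂ) * (τ : ℂ)))) = 0 →
      μ₂ ≤ w.re → w.re ≤ μ₁ → w = (μ₂ : ℂ) ∨ w = (μ₁ : ℂ) :=
  chi_plus_only_zeros_in_strip_general c τ a b μ₁ μ₂ hb hzero₂ hzero₁
end

section
/- Let $c>0$, $\tau\ge 0$, $a_-<0$, $b_-<0$. Then the function $\chi_-(z)=z^2-cz+a_-+b_-e^{-zc\tau}$ has exactly one positive real zero $\lambda_1$, and this zero is simple with $\chi_-'(\lambda_1)>0$. -/
/-!
Every positive zero `x` of `χ₋` satisfies `x (x - c) = -a₋ - b₋ e^{-x c τ} > 0`, hence `x > c`.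
On `[c, ∞)` the derivative `2x - c - b₋ c τ e^{-x c τ}` is positive, so `χ₋` is strictly
increasing there; as `χ₋(c) < 0` and `χ₋ → ∞`, the intermediate value theorem gives exactly one
zero, at which the derivative is positive.
-/

namespace ChiMinus

open Real Set

noncomputable def chi (c τ a b x : ℝ) : ℝ := x ^ 2 - c * x + a + b * exp (-(x * (c * τ)))

noncomputable def chiDeriv (c τ b x : ℝ) : ℝ := 2 * x - c - b * (c * τ) * exp (-(x * (c * τ)))

variable {c τ a b : ℝ}

theorem hasDerivAt_chi (x : ℝ) : HasDerivAt (chi c τ a b) (chiDeriv c τ b x) x := by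
  have hexp : HasDerivAt (fun x => exp (-(x * (c * τ))))
      (exp (-(x * (c * τ))) * (-(c * τ))) x :=
    (hasDerivAt_mul_const (c * τ)).neg.exp
  have hsq : HasDerivAt (fun x => x ^ 2) (2 * x) x := by simpa using hasDerivAt_pow 2 x
  exact (((hsq.sub ((hasDerivAt_id' x).const_mul c)).add_const a).add
    (hexp.const_mul b)).congr_deriv (by simp only [chiDeriv, mul_one]; ring)

theorem continuous_chi : Continuous (chi c τ a b) := by
  unfold chi
  fun_prop

theorem chiDeriv_pos (hc : 0 ≤ c) (hτ : 0 ≤ τ) (hb : b ≤ 0) {x : ℝ} (hx : c < x) :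
    0 < chiDeriv c τ b x := by
  have : 0 ≤ -b * (c * τ) * exp (-(x * (c * τ))) :=
    mul_nonneg (mul_nonneg (neg_nonneg.mpr hb) (mul_nonneg hc hτ)) (exp_pos _).le
  simp only [chiDeriv]
  linarith

theorem strictMonoOn_chi (hc : 0 ≤ c) (hτ : 0 ≤ τ) (hb : b ≤ 0) :
    StrictMonoOn (chi c τ a b) (Ici c) :=
  strictMonoOn_of_deriv_pos (convex_Ici c) continuous_chi.continuousOn fun x hx => by
    rw [interior_Ici] at hx
    rw [(hasDerivAt_chi x).deriv]
    exact chiDeriv_pos hc hτ hb hx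

theorem lt_of_chi_eq_zero (ha : a < 0) (hb : b ≤ 0) {x : ℝ} (hx : 0 < x)
    (hzero : chi c τ a b x = 0) : c < x := by
  have hbe : b * exp (-(x * (c * τ))) ≤ 0 := mul_nonpos_of_nonpos_of_nonneg hb (exp_pos _).le
  have hprod : 0 < x * (x - c) := by
    simp only [chi] at hzero
    linarith
  linarith [(pos_iff_pos_of_mul_pos hprod).mp hx]

theorem chi_self_neg (ha : a < 0) (hb : b ≤ 0) : chi c τ a b c < 0 := by
  have hbe : b * exp (-(c * (c * τ))) ≤ 0 := mul_nonpos_of_nonpos_of_nonneg hb (exp_pos _).le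
  simp only [chi]
  linarith

/-- At `M = c + 1 - a - b` we have `χ₋(M) ≥ M (M - c) + a + b ≥ 1`. -/
theorem exists_gt_chi_pos (hc : 0 ≤ c) (hτ : 0 ≤ τ) (ha : a ≤ 0) (hb : b ≤ 0) :
    ∃ M, c < M ∧ 0 < chi c τ a b M := by
  set M := c + 1 - a - b
  have hexp : exp (-(M * (c * τ))) ≤ 1 := exp_le_one_iff.mpr <| by
    have : 0 ≤ M * (c * τ) := mul_nonneg (by linarith) (mul_nonneg hc hτ)
    linarith
  have hbe : b ≤ b * exp (-(M * (c * τ))) := by nlinarith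
  have hprod : 1 - a - b ≤ M * (M - c) := by nlinarith
  refine ⟨M, by linarith, ?_⟩
  simp only [chi]
  nlinarith

end ChiMinus

open ChiMinus in
/-- The function `χ₋(z) = z² - cz + a₋ + b₋ e^{-z c τ}` with `c > 0`, `τ ≥ 0`,
`a₋ < 0`, `b₋ < 0` has exactly one positive real zero `λ₁`, which is simple with
`χ₋'(λ₁) > 0`. -/
theorem chi_minus_unique_positive_zero (c τ a b : ℝ) (hc : 0 < c) (hτ : 0 ≤ τ)
    (ha : a < 0) (hb : b < 0) :
    ∃ lam : ℝ, 0 < lam ∧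
      lam ^ 2 - c * lam + a + b * Real.exp (-(lam * (c * τ))) = 0 ∧
      (∀ x : ℝ, 0 < x → x ^ 2 - c * x + a + b * Real.exp (-(x * (c * τ))) = 0 → x = lam) ∧
      0 < deriv (fun x : ℝ => x ^ 2 - c * x + a + b * Real.exp (-(x * (c * τ)))) lam := by
  obtain ⟨M, hcM, hM⟩ := exists_gt_chi_pos hc.le hτ ha.le hb.le
  obtain ⟨lam, ⟨hclam, -⟩, hzero⟩ := intermediate_value_Icc hcM.le continuous_chi.continuousOn
    (⟨(chi_self_neg ha hb.le).le, hM.le⟩ : (0 : ℝ) ∈ Set.Icc (chi c τ a b c) (chi c τ a b M))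
  have hlam : c < lam := lt_of_chi_eq_zero ha hb.le (hc.trans_le hclam) hzero
  refine ⟨lam, hc.trans hlam, hzero, fun x hx hx0 => ?_, ?_⟩
  · exact (strictMonoOn_chi hc.le hτ hb.le).injOn (lt_of_chi_eq_zero ha hb.le hx hx0).le hlam.le
      (hx0.trans hzero.symm)
  · exact (hasDerivAt_chi (a := a) lam).deriv ▸ chiDeriv_pos hc.le hτ hb.le hlam
end

section
/- Let $c>0$, $\tau\ge 0$, $a_-<0$, $b_-<0$ and let $\lambda_1>0$ be the unique positive real zero of $\chi_-(z)=z^2-cz+a_-+b_-e^{-zc\tau}$. Then every complex zero $\lambda$ of $\chi_-$ with $\lambda\ne\lambda_1$ satisfies $\mathrm{Re}\,\lambda<\lambda_1$. -/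
/-!
Write `p(z) = z² - cz + a`. For `z = x + iy` one has
`|p(z)|² = p(x)² + y² (2 p(x) + y² + c² - 4a)`, so `|p(z)| > p(x)` whenever `p(x) ≥ 0` and `y ≠ 0`
(the discriminant `c² - 4a` is positive). On the other hand `x ↦ p(x) + b e^{-x c τ}` is strictly
increasing for `x ≥ c/2` and vanishes at `λ₁ > c`. So a zero `λ` with `Re λ = x ≥ λ₁` gives
`|b| e^{-x c τ} = |p(λ)| ≥ p(x) ≥ |b| e^{-x c τ}`, which forces `x = λ₁` and `y = 0`.
-/

open Real

lemma Complex.normSq_sq_sub_mul_add (c a : ℝ) (z : ℂ) :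
    Complex.normSq (z ^ 2 - c * z + a) = (z.re ^ 2 - c * z.re + a) ^ 2 +
      z.im ^ 2 * (2 * (z.re ^ 2 - c * z.re + a) + z.im ^ 2 + c ^ 2 - 4 * a) := by
  simp only [Complex.normSq_apply, Complex.add_re, Complex.add_im, Complex.sub_re,
    Complex.sub_im, Complex.mul_re, Complex.mul_im, Complex.ofReal_re, Complex.ofReal_im, sq]
  ring

lemma Complex.re_sq_sub_mul_add_lt_norm {c a : ℝ} {z : ℂ} (hdisc : 4 * a ≤ c ^ 2)
    (hre : 0 ≤ z.re ^ 2 - c * z.re + a) (him : z.im ≠ 0) :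
    z.re ^ 2 - c * z.re + a < ‖z ^ 2 - c * z + a‖ := by
  refine lt_of_pow_lt_pow_left₀ 2 (norm_nonneg _) ?_
  rw [Complex.sq_norm, Complex.normSq_sq_sub_mul_add]
  have : 0 < z.im ^ 2 := by positivity
  nlinarith

lemma strictMonoOn_sq_sub_mul_add_mul_exp (c a b k : ℝ) (hb : b ≤ 0) (hk : 0 ≤ k) :
    StrictMonoOn (fun x : ℝ => x ^ 2 - c * x + a + b * exp (-(x * k))) (Set.Ici (c / 2)) := by
  intro x hx y _ hxy
  have hexp : exp (-(y * k)) ≤ exp (-(x * k)) := exp_le_exp.2 (by nlinarith)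
  simp only [Set.mem_Ici] at hx
  nlinarith

theorem chi_minus_dominating_zero_general (c τ a b lam₁ : ℝ) (hc : 0 < c) (hτ : 0 ≤ τ)
    (ha : a < 0) (hb : b < 0) (hlam₁pos : 0 < lam₁)
    (hzero : lam₁ ^ 2 - c * lam₁ + a + b * Real.exp (-(lam₁ * (c * τ))) = 0) :
    ∀ lam : ℂ, lam ^ 2 - (c : ℂ) * lam + (a : ℂ) +
        (b : ℂ) * Complex.exp (-(lam * ((c : ℂ) * (τ : ℂ)))) = 0 →
      lam ≠ (lam₁ : ℂ) → lam.re < lam₁ := by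
  intro lam hz hne
  by_contra! hle
  set x := lam.re
  have hmono := strictMonoOn_sq_sub_mul_add_mul_exp c a b (c * τ) hb.le (by positivity)
  have hlam₁ : c / 2 ≤ lam₁ := by nlinarith [exp_pos (-(lam₁ * (c * τ)))]
  have hx : 0 ≤ x ^ 2 - c * x + a + b * exp (-(x * (c * τ))) :=
    hzero ▸ hmono.monotoneOn hlam₁ (hlam₁.trans hle) hle
  have hnorm : ‖lam ^ 2 - c * lam + a‖ = -b * exp (-(x * (c * τ))) := by
    rw [show lam ^ 2 - c * lam + a = ((-b : ℝ) : ℂ) * Complex.exp (-(lam * (c * τ))) by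
      push_cast; linear_combination hz, norm_mul, Complex.norm_exp, Complex.norm_real,
      norm_of_nonneg (by linarith)]
    simp [x]
  have him : lam.im = 0 := by
    by_contra him
    have hdisc : 4 * a ≤ c ^ 2 := by linarith [sq_nonneg c]
    have hpx : 0 ≤ x ^ 2 - c * x + a := by nlinarith [exp_pos (-(x * (c * τ)))]
    have := Complex.re_sq_sub_mul_add_lt_norm hdisc hpx him
    linarith
  have hlam : lam = (x : ℂ) := Complex.ext rfl (by simpa using him)
  rw [hlam] at hz hne
  have hzx : x ^ 2 - c * x + a + b * exp (-(x * (c * τ))) = 0 := by exact_mod_cast hz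
  exact hne (congrArg _ (hmono.injOn (hlam₁.trans hle) hlam₁ (hzx.trans hzero.symm)))

/-- The unique positive real zero `λ₁` of `χ₋` is dominating: every other complex
zero `λ` of `χ₋` satisfies `Re λ < λ₁`. -/
theorem chi_minus_dominating_zero (c τ a b lam₁ : ℝ) (hc : 0 < c) (hτ : 0 ≤ τ)
    (ha : a < 0) (hb : b < 0) (hlam₁pos : 0 < lam₁)
    (hzero : lam₁ ^ 2 - c * lam₁ + a + b * Real.exp (-(lam₁ * (c * τ))) = 0)
    (huniq : ∀ x : ℝ, 0 < x →
      x ^ 2 - c * x + a + b * Real.exp (-(x * (c * τ))) = 0 → x = lam₁) :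
    ∀ lam : ℂ, lam ^ 2 - (c : ℂ) * lam + (a : ℂ) +
        (b : ℂ) * Complex.exp (-(lam * ((c : ℂ) * (τ : ℂ)))) = 0 →
      lam ≠ (lam₁ : ℂ) → lam.re < lam₁ :=
  chi_minus_dominating_zero_general c τ a b lam₁ hc hτ ha hb hlam₁pos hzero
end

section
/- Let $c>0$, $\tau>0$, $a_-<0$, $b_-<0$, and let $\chi_-(z)=z^2-cz+a_-+b_-e^{-zc\tau}$. If $\lambda$ is a non-real zero of $\chi_-$, then $\lambda$ is a simple zero, i.e. $\chi_-'(\lambda)\ne 0$. -/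
/-! At a multiple zero `λ` of `χ₋`, eliminating the exponential term `b₋ e^{-λcτ}` between
`χ₋(λ) = 0` and `χ₋'(λ) = 0` leaves the real quadratic equation
`cτ λ² + (2 - c²τ) λ + (a₋cτ - c) = 0`, whose discriminant `4 + c²τ²(c² - 4a₋)` is positive
because `a₋ < 0`. A real quadratic with positive discriminant has no non-real root. -/

open Complex

theorem discrim_nonpos_of_quadratic_eq_zero_of_im_ne_zero {p q r : ℝ} {z : ℂ} (hz : z.im ≠ 0)
    (h : (p : ℂ) * z ^ 2 + q * z + r = 0) : discrim p q r ≤ 0 := by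
  have hre : p * (z.re ^ 2 - z.im ^ 2) + q * z.re + r = 0 := by
    simpa [pow_two] using congrArg re h
  have him : (2 * p * z.re + q) * z.im = 0 := by
    have := congrArg im h
    simp only [pow_two, add_im, mul_im, ofReal_re, ofReal_im, zero_mul, add_zero,
      zero_im] at this
    linear_combination this
  have hvertex : 2 * p * z.re + q = 0 := (mul_eq_zero.mp him).resolve_right hz
  have hdiscrim : discrim p q r = -(2 * p * z.im) ^ 2 := by
    unfold discrim
    linear_combination (2 * p * z.re + q) * hvertex - 4 * p * hre
  rw [hdiscrim]
  exact neg_nonpos.mpr (sq_nonneg _)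

noncomputable def chiMinus (c τ a b : ℝ) (z : ℂ) : ℂ :=
  z ^ 2 - c * z + a + b * exp (-(z * (c * τ)))

section chiMinus

variable {c τ a b : ℝ}

theorem hasDerivAt_chiMinus (z : ℂ) :
    HasDerivAt (chiMinus c τ a b) (2 * z - c - c * τ * (b * exp (-(z * (c * τ))))) z :=
  ((((hasDerivAt_pow 2 z).sub (hasDerivAt_const_mul (c : ℂ))).add_const (a : ℂ)).add
    ((hasDerivAt_mul_const ((c : ℂ) * τ)).neg.cexp.const_mul (b : ℂ))).congr_deriv
    (by simp only [Pi.neg_apply]; push_cast; ring)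

theorem chiMinus_quadratic_of_deriv_eq_zero {z : ℂ} (hzero : chiMinus c τ a b z = 0)
    (hderiv : deriv (chiMinus c τ a b) z = 0) :
    ((c * τ : ℝ) : ℂ) * z ^ 2 + ((2 - c ^ 2 * τ : ℝ) : ℂ) * z + ((a * c * τ - c : ℝ) : ℂ) = 0 := by
  rw [(hasDerivAt_chiMinus z).deriv] at hderiv
  unfold chiMinus at hzero
  push_cast
  linear_combination (c * τ : ℂ) * hzero + hderiv

theorem discrim_chiMinus_quadratic_pos (ha : a < 0) :
    0 < discrim (c * τ) (2 - c ^ 2 * τ) (a * c * τ - c) := by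
  have hdiscrim : discrim (c * τ) (2 - c ^ 2 * τ) (a * c * τ - c)
      = 4 + (c * τ) ^ 2 * (c ^ 2 - 4 * a) := by
    unfold discrim
    ring
  have hcoeff : 0 ≤ c ^ 2 - 4 * a := by linarith [sq_nonneg c]
  rw [hdiscrim]
  positivity

end chiMinus

theorem chi_minus_nonreal_zero_simple_general (c τ a b : ℝ)
    (ha : a < 0) :
    ∀ lam : ℂ, lam.im ≠ 0 →
      lam ^ 2 - (c : ℂ) * lam + (a : ℂ) +
        (b : ℂ) * Complex.exp (-(lam * ((c : ℂ) * (τ : ℂ)))) = 0 →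
      deriv (fun z : ℂ => z ^ 2 - (c : ℂ) * z + (a : ℂ) +
        (b : ℂ) * Complex.exp (-(z * ((c : ℂ) * (τ : ℂ))))) lam ≠ 0 := by
  intro lam hlam hzero hderiv
  have hquadratic := chiMinus_quadratic_of_deriv_eq_zero (c := c) (τ := τ) (a := a) (b := b)
    hzero hderiv
  exact (discrim_chiMinus_quadratic_pos ha).not_ge
    (discrim_nonpos_of_quadratic_eq_zero_of_im_ne_zero hlam hquadratic)

/-- Any non-real zero of `χ₋(z) = z² - cz + a₋ + b₋ e^{-z c τ}` (with `c > 0`,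
`τ > 0`, `a₋ < 0`, `b₋ < 0`) is a simple zero. -/
theorem chi_minus_nonreal_zero_simple (c τ a b : ℝ) (hc : 0 < c) (hτ : 0 < τ)
    (ha : a < 0) (hb : b < 0) :
    ∀ lam : ℂ, lam.im ≠ 0 →
      lam ^ 2 - (c : ℂ) * lam + (a : ℂ) +
        (b : ℂ) * Complex.exp (-(lam * ((c : ℂ) * (τ : ℂ)))) = 0 →
      deriv (fun z : ℂ => z ^ 2 - (c : ℂ) * z + (a : ℂ) +
        (b : ℂ) * Complex.exp (-(z * ((c : ℂ) * (τ : ℂ))))) lam ≠ 0 :=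
  chi_minus_nonreal_zero_simple_general c τ a b ha
end

section
/- Let $c>0$, $\tau>0$, $a_-<0$, $b_-<0$. Then no zero of $\chi_-(z)=z^2-cz+a_-+b_-e^{-zc\tau}$ has multiplicity greater than two; that is, the system $\chi_-(z)=\chi_-'(z)=\chi_-''(z)=0$ has no solution. -/
/-!
Write `E = b e^{-zcτ}`. The three equations `χ₋ = χ₋' = χ₋'' = 0` are linear in `E`: the last gives
`E = -2/(cτ)²`, the second then gives `z = c/2 - 1/(cτ)`, and substituting into the first yields
`a₋ = c²/4 + 1/(cτ)² > 0`.
-/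

open Complex

theorem triple_zero_relation {R : Type*} [CommRing R] {a c k z E : R}
    (h₀ : z ^ 2 - c * z + a + E = 0) (h₁ : 2 * z - c - k * E = 0) (h₂ : 2 + k ^ 2 * E = 0) :
    4 * a * k ^ 2 = c ^ 2 * k ^ 2 + 4 := by
  linear_combination 4 * k ^ 2 * h₀ - 4 * h₂ - (2 * k * z - c * k - 2) * (k * h₁ + h₂)

section

variable (c a b k : ℂ)

theorem deriv_quadratic_add_exp :
    deriv (fun w : ℂ => w ^ 2 - c * w + a + b * exp (-(w * k))) =
      fun w => 2 * w - c - k * (b * exp (-(w * k))) := by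
  funext w
  refine HasDerivAt.deriv ?_
  exact ((((hasDerivAt_pow 2 w).sub ((hasDerivAt_id w).const_mul c)).add_const a).add
    (((hasDerivAt_id w).mul_const k).neg.cexp.const_mul b)).congr_deriv
      (by simp only [id_eq, Pi.neg_apply]; ring)

theorem deriv_linear_sub_exp :
    deriv (fun w : ℂ => 2 * w - c - k * (b * exp (-(w * k)))) =
      fun w => 2 + k ^ 2 * (b * exp (-(w * k))) := by
  funext w
  refine HasDerivAt.deriv ?_
  exact ((((hasDerivAt_id w).const_mul 2).sub_const c).sub
    (((hasDerivAt_id w).mul_const k).neg.cexp.const_mul b |>.const_mul k)).congr_deriv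
      (by simp only [id_eq, Pi.neg_apply]; ring)

end

theorem chi_minus_no_triple_zero_general (c τ a b : ℝ)
    (ha : a < 0) :
    ¬ ∃ z : ℂ,
      (z ^ 2 - (c : ℂ) * z + (a : ℂ) +
        (b : ℂ) * Complex.exp (-(z * ((c : ℂ) * (τ : ℂ)))) = 0) ∧
      deriv (fun w : ℂ => w ^ 2 - (c : ℂ) * w + (a : ℂ) +
        (b : ℂ) * Complex.exp (-(w * ((c : ℂ) * (τ : ℂ))))) z = 0 ∧
      deriv (deriv (fun w : ℂ => w ^ 2 - (c : ℂ) * w + (a : ℂ) +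
        (b : ℂ) * Complex.exp (-(w * ((c : ℂ) * (τ : ℂ)))))) z = 0 := by
  rintro ⟨z, h₀, h₁, h₂⟩
  rw [deriv_quadratic_add_exp] at h₁ h₂
  rw [deriv_linear_sub_exp] at h₂
  have key : 4 * a * (c * τ) ^ 2 = c ^ 2 * (c * τ) ^ 2 + 4 := by
    exact_mod_cast triple_zero_relation h₀ h₁ h₂
  nlinarith [sq_nonneg (c * τ), sq_nonneg (c * (c * τ))]

/-- No zero of `χ₋(z) = z² - cz + a₋ + b₋ e^{-z c τ}` has multiplicity greater
than two: the system `χ₋(z) = χ₋'(z) = χ₋''(z) = 0` has no solution. -/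
theorem chi_minus_no_triple_zero (c τ a b : ℝ) (hc : 0 < c) (hτ : 0 < τ)
    (ha : a < 0) (hb : b < 0) :
    ¬ ∃ z : ℂ,
      (z ^ 2 - (c : ℂ) * z + (a : ℂ) +
        (b : ℂ) * Complex.exp (-(z * ((c : ℂ) * (τ : ℂ)))) = 0) ∧
      deriv (fun w : ℂ => w ^ 2 - (c : ℂ) * w + (a : ℂ) +
        (b : ℂ) * Complex.exp (-(w * ((c : ℂ) * (τ : ℂ))))) z = 0 ∧
      deriv (deriv (fun w : ℂ => w ^ 2 - (c : ℂ) * w + (a : ℂ) +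
        (b : ℂ) * Complex.exp (-(w * ((c : ℂ) * (τ : ℂ)))))) z = 0 :=
  chi_minus_no_triple_zero_general c τ a b ha
end

section
/- Let $c>0$, $\tau\ge 0$, $a_-<0$, $b_-<0$, and suppose $\lambda_2=\alpha+i\beta_2$ and $\lambda_3=\alpha+i\beta_3$ with $0\le\beta_2<\beta_3$ are both zeros of $\chi_-(z)=z^2-cz+a_-+b_-e^{-zc\tau}$ having the same real part $\alpha$. Then a contradiction follows; i.e., for each fixed real part $\alpha$, $\chi_-$ has at most one zero with nonnegative imaginary part and real part $\alpha$. -/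
/-- For each fixed real part `α`, `χ₋` has at most one zero with that real part
and nonnegative imaginary part: two zeros `α + iβ₂`, `α + iβ₃` with
`0 ≤ β₂ < β₃` lead to a contradiction. -/
theorem chi_minus_at_most_one_zero_on_vertical_line (c τ a b : ℝ)
    (hc : 0 < c) (hτ : 0 ≤ τ) (ha : a < 0) (hb : b < 0) :
    ∀ α β₂ β₃ : ℝ, 0 ≤ β₂ → β₂ < β₃ →
      (((α : ℂ) + (β₂ : ℂ) * Complex.I) ^ 2 - (c : ℂ) * ((α : ℂ) + (β₂ : ℂ) * Complex.I)
        + (a : ℂ) + (b : ℂ) *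
          Complex.exp (-(((α : ℂ) + (β₂ : ℂ) * Complex.I) * ((c : ℂ) * (τ : ℂ)))) = 0) →
      (((α : ℂ) + (β₃ : ℂ) * Complex.I) ^ 2 - (c : ℂ) * ((α : ℂ) + (β₃ : ℂ) * Complex.I)
        + (a : ℂ) + (b : ℂ) *
          Complex.exp (-(((α : ℂ) + (β₃ : ℂ) * Complex.I) * ((c : ℂ) * (τ : ℂ)))) = 0) →
      False := by
  intro α β₂ β₃ hβ₂ hlt h2 h3
  have key : ∀ β : ℝ,
      (((α : ℂ) + (β : ℂ) * Complex.I) ^ 2 - (c : ℂ) * ((α : ℂ) + (β : ℂ) * Complex.I)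
        + (a : ℂ) + (b : ℂ) *
          Complex.exp (-(((α : ℂ) + (β : ℂ) * Complex.I) * ((c : ℂ) * (τ : ℂ)))) = 0) →
      (α^2 - β^2 - c*α + a)^2 + (2*α*β - c*β)^2
        = b^2 * Real.exp (-(α*(c*τ))) ^ 2 := by
    intro β h
    have h' : ((α : ℂ) + (β : ℂ) * Complex.I) ^ 2 - (c : ℂ) * ((α : ℂ) + (β : ℂ) * Complex.I)
        + (a : ℂ)
        = -((b : ℂ) * Complex.exp (-(((α : ℂ) + (β : ℂ) * Complex.I) * ((c : ℂ) * (τ : ℂ))))) := by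
      linear_combination h
    have hsq := congrArg Complex.normSq h'
    have hs := Real.sin_sq_add_cos_sq (β * (c*τ))
    simp [Complex.normSq_apply, Complex.exp_re, Complex.exp_im, Complex.add_re, Complex.add_im,
      Complex.mul_re, Complex.mul_im, Complex.sub_re, Complex.sub_im, Complex.neg_re,
      Complex.neg_im, Complex.I_re, Complex.I_im, Complex.ofReal_re, Complex.ofReal_im,
      pow_two] at hsq
    linear_combination hsq + b^2 * Real.exp (-(α*(c*τ)))^2 * hs
  have e2 := key β₂ h2
  have e3 := key β₃ h3
  have h1 : 0 < β₃^2 - β₂^2 := by nlinarith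
  have h2' : 0 < β₂^2 + β₃^2 + α^2 + (α - c)^2 - 2*a := by nlinarith [sq_nonneg β₂, sq_nonneg β₃, sq_nonneg α, sq_nonneg (α - c)]
  nlinarith [mul_pos h1 h2', e2, e3]
end

section
/- Fix $\tau>0$, $p\in(0,1)$, $q<0$. For each $\epsilon>0$, let $\mu(\epsilon)$ denote the unique positive root of $\epsilon z^2-z-1+pe^{-z\tau}=0$ and $\lambda(\epsilon)$ the unique positive root of $\epsilon z^2-z-1+qe^{-z\tau}=0$. Then there is no $\epsilon_0>0$ at which $\mu'(\epsilon_0)\lambda(\epsilon_0)=\mu(\epsilon_0)\lambda'(\epsilon_0)$; consequently the ratio $\mu(\epsilon)/\lambda(\epsilon)$ has nonvanishing derivative, and $\mu_1(c)/\lambda_1(c)$ is strictly increasing in $c>0$, where $\mu_1(c)=\mu(c^{-2})/c$ and $\lambda_1(c)=\lambda(c^{-2})/c$ are the unique positive roots of $z^2-cz-1+pe^{-c\tau z}=0$ and $z^2-cz-1+qe^{-c\tau z}=0$ respectively. -/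
/-!
Differentiating `ε z² - z - 1 + a e^{-zτ} = 0` along a root `z(ε)` gives `z' D = -z²`, where
`D = 2εz - 1 - aτe^{-zτ}` is the `z`-derivative of the left side. At the unique positive root
`D > 0`, since the left side equals `a - 1 < 0` at `z = 0` and first vanishes at the root.
Eliminating the exponential with the equation itself, `D / z = 2ε - τ + τεz - (1 + τ)/z` no
longer depends on `a` and is strictly increasing in `z`. As `μ < λ`, this gives
`μ'/μ = -μ/D_μ < -λ/D_λ = λ'/λ`, so `μ/λ` decreases strictly in `ε`, and hence increases
strictly in `c = ε^{-1/2}`.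
-/

open Real Set Filter Topology

lemma neg_of_neg_of_forall_ne_zero {f : ℝ → ℝ} {a x : ℝ} (hax : a ≤ x)
    (hf : ContinuousOn f (Icc a x)) (ha : f a < 0) (hne : ∀ y ∈ Ioc a x, f y ≠ 0) :
    f x < 0 := by
  by_contra! hx
  obtain ⟨c, hc, hfc⟩ := intermediate_value_Icc hax hf ⟨ha.le, hx⟩
  have hca : c ≠ a := by rintro rfl; linarith
  exact hne c ⟨lt_of_le_of_ne hc.1 hca.symm, hc.2⟩ hfc

lemma HasDerivAt.nonneg_of_neg_on_Ioo {f : ℝ → ℝ} {f' a b : ℝ} (hab : a < b)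
    (hf : HasDerivAt f f' b) (hb : f b = 0) (hneg : ∀ x ∈ Ioo a b, f x < 0) : 0 ≤ f' := by
  have hslope : Tendsto (slope f b) (𝓝[<] b) (𝓝 f') :=
    (hasDerivAt_iff_tendsto_slope.mp hf).mono_left <|
      nhdsWithin_mono b fun _ hx => ne_of_lt hx
  refine ge_of_tendsto hslope ?_
  filter_upwards [Ioo_mem_nhdsLT hab] with x hx
  rw [slope_def_field, hb, sub_zero]
  exact div_nonneg_of_nonpos (hneg x hx).le (by linarith [hx.2])

lemma HasDerivAt.nonneg_of_first_zero {f : ℝ → ℝ} {f' a b : ℝ} (hab : a < b)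
    (hf : Continuous f) (hd : HasDerivAt f f' b) (ha : f a < 0) (hb : f b = 0)
    (hne : ∀ x ∈ Ioo a b, f x ≠ 0) : 0 ≤ f' :=
  hd.nonneg_of_neg_on_Ioo hab hb fun _ hx =>
    neg_of_neg_of_forall_ne_zero hx.1.le hf.continuousOn ha fun y hy =>
      hne y ⟨hy.1, hy.2.trans_lt hx.2⟩

lemma strictAntiOn_div_of_deriv_mul_lt {f g : ℝ → ℝ} {s : Set ℝ} (hs : Convex ℝ s)
    (hso : IsOpen s) (hf : ∀ x ∈ s, DifferentiableAt ℝ f x)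
    (hg : ∀ x ∈ s, DifferentiableAt ℝ g x) (hg0 : ∀ x ∈ s, 0 < g x)
    (hlt : ∀ x ∈ s, deriv f x * g x < f x * deriv g x) :
    StrictAntiOn (fun x => f x / g x) s := by
  have hdiv : ∀ x ∈ s, HasDerivAt (fun x => f x / g x)
      ((deriv f x * g x - f x * deriv g x) / g x ^ 2) x := fun x hx =>
    (hf x hx).hasDerivAt.div (hg x hx).hasDerivAt (hg0 x hx).ne'
  refine strictAntiOn_of_deriv_neg hs
    (fun x hx => (hdiv x hx).continuousAt.continuousWithinAt) ?_
  rw [hso.interior_eq]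
  intro x hx
  rw [(hdiv x hx).deriv]
  exact div_neg_of_neg_of_pos (by linarith [hlt x hx]) (pow_pos (hg0 x hx) 2)

lemma StrictAntiOn.comp_one_div_sq {f : ℝ → ℝ} (hf : StrictAntiOn f (Ioi 0)) :
    StrictMonoOn (fun c => f (1 / c ^ 2)) (Ioi 0) := by
  intro a (ha : 0 < a) b (hb : 0 < b) hab
  exact hf (by simp only [mem_Ioi]; positivity) (by simp only [mem_Ioi]; positivity)
    (one_div_lt_one_div_of_lt (by positivity) (by nlinarith))

section Toy

variable {τ a ε : ℝ}

noncomputable def toyChar (τ a ε z : ℝ) : ℝ := ε * z ^ 2 - z - 1 + a * exp (-z * τ)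

noncomputable def toyCharDeriv (τ a ε z : ℝ) : ℝ := 2 * ε * z - 1 - a * τ * exp (-z * τ)

def IsUniquePosRoot (τ a ε z : ℝ) : Prop :=
  0 < z ∧ toyChar τ a ε z = 0 ∧ ∀ y > (0 : ℝ), toyChar τ a ε y = 0 → y = z

lemma continuous_toyChar : Continuous (toyChar τ a ε) := by
  unfold toyChar; fun_prop

lemma hasDerivAt_toyChar (z : ℝ) : HasDerivAt (toyChar τ a ε) (toyCharDeriv τ a ε z) z := by
  have h := (((((hasDerivAt_id z).pow 2).const_mul ε).sub (hasDerivAt_id z)).sub_const 1).add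
    ((((hasDerivAt_id z).neg.mul_const τ).exp).const_mul a)
  refine h.congr_deriv ?_
  simp only [toyCharDeriv, id, Pi.neg_apply]
  ring

lemma HasDerivAt.toyChar {z : ℝ → ℝ} {z' : ℝ} (hz : HasDerivAt z z' ε) :
    HasDerivAt (fun x => toyChar τ a x (z x))
      (z ε ^ 2 + toyCharDeriv τ a ε (z ε) * z') ε := by
  have h := ((((hasDerivAt_id ε).mul (hz.pow 2)).sub hz).sub_const 1).add
    (((hz.neg.mul_const τ).exp).const_mul a)
  refine h.congr_deriv ?_
  simp only [toyCharDeriv, id, Pi.neg_apply, Pi.pow_apply]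
  ring

lemma deriv_mul_toyCharDeriv {z : ℝ → ℝ} (hd : DifferentiableAt ℝ z ε)
    (hroot : ∀ᶠ x in 𝓝 ε, toyChar τ a x (z x) = 0) :
    deriv z ε * toyCharDeriv τ a ε (z ε) = -z ε ^ 2 := by
  have h := hd.hasDerivAt.toyChar.unique
    ((hasDerivAt_const ε (0 : ℝ)).congr_of_eventuallyEq hroot)
  linarith

lemma IsUniquePosRoot.toyCharDeriv_nonneg {z : ℝ} (hz : IsUniquePosRoot τ a ε z) (ha : a < 1) :
    0 ≤ toyCharDeriv τ a ε z := by
  obtain ⟨hz0, hroot, huniq⟩ := hz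
  refine (hasDerivAt_toyChar z).nonneg_of_first_zero hz0 continuous_toyChar ?_ hroot ?_
  · simp [toyChar, ha]
  · exact fun y hy hy0 => hy.2.ne (huniq y hy.1 hy0)

lemma toyCharDeriv_pos_and_deriv_eq {z : ℝ → ℝ}
    (hz : ∀ x > (0 : ℝ), IsUniquePosRoot τ a x (z x)) (ha : a < 1) (hε : 0 < ε)
    (hd : DifferentiableAt ℝ z ε) :
    0 < toyCharDeriv τ a ε (z ε) ∧ deriv z ε = -z ε ^ 2 / toyCharDeriv τ a ε (z ε) := by
  have hroot : ∀ᶠ x in 𝓝 ε, toyChar τ a x (z x) = 0 :=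
    Filter.mem_of_superset (Ioi_mem_nhds hε) fun x hx => (hz x hx).2.1
  have hmul := deriv_mul_toyCharDeriv hd hroot
  have hD : toyCharDeriv τ a ε (z ε) ≠ 0 := by
    intro h
    rw [h, mul_zero] at hmul
    nlinarith [(hz ε hε).1]
  exact ⟨lt_of_le_of_ne ((hz ε hε).toyCharDeriv_nonneg ha) hD.symm, by field_simp; linarith⟩

lemma toyCharDeriv_div_eq {z : ℝ} (hroot : toyChar τ a ε z = 0) (hz : z ≠ 0) :
    toyCharDeriv τ a ε z / z = 2 * ε - τ + τ * ε * z - (1 + τ) / z := by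
  unfold toyChar at hroot
  field_simp
  unfold toyCharDeriv
  linear_combination (-τ) * hroot

lemma toyCharDeriv_div_lt {b m l : ℝ} (hτ : 0 ≤ τ) (hε : 0 ≤ ε) (hm : 0 < m) (hml : m < l)
    (hmroot : toyChar τ a ε m = 0) (hlroot : toyChar τ b ε l = 0) :
    toyCharDeriv τ a ε m / m < toyCharDeriv τ b ε l / l := by
  rw [toyCharDeriv_div_eq hmroot hm.ne', toyCharDeriv_div_eq hlroot (hm.trans hml).ne']
  have h1 : (1 + τ) / l < (1 + τ) / m := div_lt_div_of_pos_left (by linarith) hm hml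
  have h2 : τ * ε * m ≤ τ * ε * l := mul_le_mul_of_nonneg_left hml.le (by positivity)
  linarith

/-- A root for `a > 0` lies below the positive root of `ε z² - z - 1`, one for `b < 0` above. -/
lemma lt_of_toyChar_eq_zero {b m l : ℝ} (ha : 0 < a) (hb : b < 0) (hm : 0 < m) (hl : 0 < l)
    (hmroot : toyChar τ a ε m = 0) (hlroot : toyChar τ b ε l = 0) : m < l := by
  unfold toyChar at hmroot hlroot
  have hm' : ε * m ^ 2 - m - 1 < 0 := by nlinarith [mul_pos ha (exp_pos (-m * τ))]
  have hl' : 0 < ε * l ^ 2 - l - 1 := by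
    nlinarith [mul_pos (neg_pos.mpr hb) (exp_pos (-l * τ))]
  by_contra! hlm
  nlinarith [mul_le_mul_of_nonneg_left hlm hm.le, mul_pos hm hl]

lemma deriv_mul_lt_mul_deriv {p q : ℝ} {μ lam : ℝ → ℝ} (hτ : 0 ≤ τ) (hp₀ : 0 < p)
    (hp₁ : p < 1) (hq : q < 0) (hμ : ∀ x > (0 : ℝ), IsUniquePosRoot τ p x (μ x))
    (hlam : ∀ x > (0 : ℝ), IsUniquePosRoot τ q x (lam x)) (hε : 0 < ε)
    (hμd : DifferentiableAt ℝ μ ε) (hlamd : DifferentiableAt ℝ lam ε) :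
    deriv μ ε * lam ε < μ ε * deriv lam ε := by
  obtain ⟨hm, hmroot, -⟩ := hμ ε hε
  obtain ⟨hl, hlroot, -⟩ := hlam ε hε
  obtain ⟨hD₁, hμ'⟩ := toyCharDeriv_pos_and_deriv_eq hμ hp₁ hε hμd
  obtain ⟨hD₂, hlam'⟩ := toyCharDeriv_pos_and_deriv_eq hlam (hq.trans one_pos) hε hlamd
  have hml := lt_of_toyChar_eq_zero hp₀ hq hm hl hmroot hlroot
  have hDD := toyCharDeriv_div_lt hτ hε.le hm hml hmroot hlroot
  rw [div_lt_div_iff₀ hm hl] at hDD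
  rw [hμ', hlam', div_mul_eq_mul_div, mul_div_assoc', div_lt_div_iff₀ hD₁ hD₂]
  nlinarith [mul_pos hm hl]

end Toy

/-- For the `toy' model: with `τ > 0`, `p ∈ (0,1)`, `q < 0`, let `μ(ε)` and
`lam(ε)` be the unique positive roots of `ε z² - z - 1 + p e^{-zτ} = 0` and
`ε z² - z - 1 + q e^{-zτ} = 0`. Then there is no `ε₀ > 0` with
`μ'(ε₀) lam(ε₀) = μ(ε₀) lam'(ε₀)`, and the ratio `μ₁(c)/λ₁(c)` (where
`μ₁(c) = μ(c⁻²)/c`, `λ₁(c) = lam(c⁻²)/c`) is strictly increasing in `c > 0`. -/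
theorem toy_ratio_strictly_increasing (τ p q : ℝ) (hτ : 0 < τ)
    (hp : p ∈ Set.Ioo (0 : ℝ) 1) (hq : q < 0)
    (μ lam : ℝ → ℝ)
    (hμ : ∀ ε > (0 : ℝ), 0 < μ ε ∧
      ε * (μ ε) ^ 2 - μ ε - 1 + p * Real.exp (-(μ ε) * τ) = 0 ∧
      ∀ z > (0 : ℝ), ε * z ^ 2 - z - 1 + p * Real.exp (-z * τ) = 0 → z = μ ε)
    (hlam : ∀ ε > (0 : ℝ), 0 < lam ε ∧
      ε * (lam ε) ^ 2 - lam ε - 1 + q * Real.exp (-(lam ε) * τ) = 0 ∧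
      ∀ z > (0 : ℝ), ε * z ^ 2 - z - 1 + q * Real.exp (-z * τ) = 0 → z = lam ε)
    (hμdiff : ∀ ε > (0 : ℝ), DifferentiableAt ℝ μ ε)
    (hlamdiff : ∀ ε > (0 : ℝ), DifferentiableAt ℝ lam ε) :
    (∀ ε₀ > (0 : ℝ), deriv μ ε₀ * lam ε₀ ≠ μ ε₀ * deriv lam ε₀) ∧
    StrictMonoOn (fun c : ℝ => (μ (1 / c ^ 2) / c) / (lam (1 / c ^ 2) / c))
      (Set.Ioi 0) := by
  have core : ∀ ε > (0 : ℝ), deriv μ ε * lam ε < μ ε * deriv lam ε := fun ε hε =>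
    deriv_mul_lt_mul_deriv hτ.le hp.1 hp.2 hq hμ hlam hε (hμdiff ε hε) (hlamdiff ε hε)
  refine ⟨fun ε hε => (core ε hε).ne, ?_⟩
  have hanti := strictAntiOn_div_of_deriv_mul_lt (convex_Ioi 0) isOpen_Ioi hμdiff hlamdiff
    (fun ε hε => (hlam ε hε).1) core
  refine hanti.comp_one_div_sq.congr fun c (hc : 0 < c) => ?_
  exact (div_div_div_cancel_right₀ hc.ne' _ _).symm
end

section
/- Let $h\ge 0$, and let $L,M(t):C([-h,0],\mathbb{R}^n)\to\mathbb{R}^n$ for $t\le 0$ be continuous linear operators with $\sup_{t\le 0}\|M(t)\|<\infty$ and $\|M(t)\|\to 0$ as $t\to-\infty$. Then the linear functional differential system $x'(t)=(L+M(t))x_t$, $t\le 0$, has no nonzero solution $x:(-\infty,0]\to\mathbb{R}^n$ that is exponentially small at $-\infty$, i.e. such that $x(t)e^{\gamma t}\to 0$ as $t\to-\infty$ for every $\gamma\in\mathbb{R}$. -/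
/-!
Let `D` bound `‖L + M t‖` on `t ≤ 0` and take `a > D`. Since the solution decays faster than
`e^{a t}` at `-∞`, `N = sup_{t ≤ 0} e^{-a t} ‖x t‖` is finite, so `‖x' t‖ ≤ D ‖x_t‖ ≤ D N e^{a t}`.
Integrating from `-∞` gives `‖x t‖ ≤ (D / a) N e^{a t}`, that is `N ≤ (D / a) N`, hence `N = 0`.
-/

open Set Filter Topology Real

theorem bddAbove_image_Iic_of_tendsto_atBot {f : ℝ → ℝ} {T c : ℝ} (hf : ContinuousOn f (Iic T))
    (hlim : Tendsto f atBot (𝓝 c)) : BddAbove (f '' Iic T) := by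
  obtain ⟨S, hS⟩ := eventually_atBot.1 (hlim.eventually (eventually_le_nhds (lt_add_one c)))
  have hsplit : Iic T ⊆ Iic S ∪ Icc S T := fun u hu => by
    rcases le_total u S with huS | hSu
    exacts [Or.inl huS, Or.inr ⟨hSu, hu⟩]
  have hleft : BddAbove (f '' Iic S) := ⟨c + 1, forall_mem_image.2 hS⟩
  refine BddAbove.mono (image_mono hsplit) ?_
  rw [image_union]
  exact hleft.union (isCompact_Icc.bddAbove_image (hf.mono fun u hu => hu.2))

theorem norm_le_of_norm_deriv_le_mul_exp {E : Type*} [NormedAddCommGroup E] [NormedSpace ℝ E]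
    {x x' : ℝ → E} {T a c : ℝ} (ha : 0 < a) (hx : ∀ v ≤ T, HasDerivAt x (x' v) v)
    (hx0 : Tendsto x atBot (𝓝 0)) (hx' : ∀ v ≤ T, ‖x' v‖ ≤ c * exp (a * v))
    {s : ℝ} (hs : s ≤ T) : ‖x s‖ ≤ c / a * exp (a * s) := by
  set B : ℝ → ℝ → ℝ := fun t₀ w => ‖x t₀‖ + c / a * (exp (a * w) - exp (a * t₀))
  have hB : ∀ t₀ v, HasDerivAt (B t₀) (c * exp (a * v)) v := fun t₀ v => by
    refine ((((hasDerivAt_id v).const_mul a).exp.sub_const (exp (a * t₀))).const_mul (c / a)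
      |>.const_add ‖x t₀‖).congr_deriv ?_
    field_simp
    simp
  have fence : ∀ t₀ ≤ s, ‖x s‖ ≤ B t₀ s := fun t₀ ht₀ =>
    image_norm_le_of_norm_deriv_right_le_deriv_boundary
      (fun v hv => (hx v (hv.2.trans hs)).continuousAt.continuousWithinAt)
      (fun v hv => (hx v (hv.2.le.trans hs)).hasDerivWithinAt) (by simp [B]) (hB t₀)
      (fun v hv => hx' v (hv.2.le.trans hs)) ⟨ht₀, le_rfl⟩
  have hlim : Tendsto (fun t₀ => B t₀ s) atBot (𝓝 (‖(0 : E)‖ + c / a * (exp (a * s) - 0))) :=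
    hx0.norm.add (tendsto_const_nhds.mul
      (tendsto_const_nhds.sub (tendsto_exp_atBot.comp (tendsto_id.const_mul_atBot ha))))
  simpa using ge_of_tendsto hlim (eventually_atBot.2 ⟨s, fence⟩)

theorem eq_zero_of_norm_deriv_le_of_tendsto_exp_smul {E : Type*} [NormedAddCommGroup E]
    [NormedSpace ℝ E] {x x' : ℝ → E} {T D a : ℝ} (ha : 0 < a) (hDa : D < a)
    (hx : ∀ v ≤ T, HasDerivAt x (x' v) v)
    (hx' : ∀ v ≤ T, ∀ B, 0 ≤ B → (∀ u ≤ v, ‖x u‖ ≤ B) → ‖x' v‖ ≤ D * B)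
    (hsmall : Tendsto (fun u => exp (-a * u) • x u) atBot (𝓝 0)) {s : ℝ} (hs : s ≤ T) :
    x s = 0 := by
  set g : ℝ → ℝ := fun u => exp (-a * u) * ‖x u‖
  have hxg : ∀ u, ‖x u‖ = exp (a * u) * g u := fun u => by
    rw [← mul_assoc, ← exp_add]; simp
  have hg_bdd : BddAbove (g '' Iic T) := by
    refine bddAbove_image_Iic_of_tendsto_atBot (c := 0) (fun u hu => ?_) ?_
    · exact ((continuous_exp.comp (continuous_const.mul continuous_id)).continuousAt.mul
        (hx u hu).continuousAt.norm).continuousWithinAt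
    · simpa [g, norm_smul, abs_of_pos (exp_pos _)] using hsmall.norm
  set N := sSup (g '' Iic T)
  have hgN : ∀ u ≤ T, g u ≤ N := fun u hu => le_csSup hg_bdd (mem_image_of_mem g hu)
  have hN_nonneg : 0 ≤ N := (by positivity : 0 ≤ g T).trans (hgN T le_rfl)
  have hx0 : Tendsto x atBot (𝓝 0) := by
    have := (tendsto_exp_atBot.comp (tendsto_id.const_mul_atBot ha)).smul hsmall
    refine (this.congr fun u => ?_).trans (by simp)
    simp [smul_smul, ← exp_add]
  have hxN : ∀ u ≤ T, ‖x u‖ ≤ D * N / a * exp (a * u) := fun u hu =>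
    norm_le_of_norm_deriv_le_mul_exp ha hx hx0 (fun v hv => by
      have := hx' v hv (N * exp (a * v)) (by positivity) fun w hw => by
        rw [hxg, mul_comm (exp _)]
        exact mul_le_mul (hgN w (hw.trans hv)) (exp_le_exp.2 (by nlinarith)) (exp_pos _).le
          hN_nonneg
      linarith) hu
  have hN_le : N ≤ D * N / a := csSup_le (nonempty_Iic.image g) <| forall_mem_image.2 fun u hu =>
    le_of_mul_le_mul_left (by rw [← hxg, mul_comm]; exact hxN u hu) (exp_pos (a * u))
  have hN_nonpos : N ≤ 0 := by
    rw [le_div_iff₀ ha] at hN_le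
    nlinarith
  rw [← norm_le_zero_iff, hxg]
  exact mul_nonpos_of_nonneg_of_nonpos (exp_pos _).le ((hgN s hs).trans hN_nonpos)

theorem no_small_solutions_general (n : ℕ) (h : ℝ)
    (L : C(Set.Icc (-h) (0 : ℝ), Fin n → ℝ) →L[ℝ] (Fin n → ℝ))
    (M : ℝ → (C(Set.Icc (-h) (0 : ℝ), Fin n → ℝ) →L[ℝ] (Fin n → ℝ)))
    (hMbdd : ∃ C : ℝ, ∀ t ≤ (0 : ℝ), ‖M t‖ ≤ C)
    (x : ℝ → Fin n → ℝ) (hx : Continuous x)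
    (hsol : ∀ t ≤ (0 : ℝ), HasDerivAt x
      ((L + M t) (ContinuousMap.mk (fun s : Set.Icc (-h) (0 : ℝ) => x (t + (s : ℝ)))
        (hx.comp (continuous_const.add continuous_subtype_val)))) t)
    (hsmall : ∀ γ : ℝ,
      Filter.Tendsto (fun t => Real.exp (γ * t) • x t) Filter.atBot (nhds 0)) :
    ∀ t ≤ (0 : ℝ), x t = 0 := by
  obtain ⟨C, hC⟩ := hMbdd
  have hD : 0 ≤ ‖L‖ + C := add_nonneg (norm_nonneg L) ((norm_nonneg (M 0)).trans (hC 0 le_rfl))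
  refine fun t ht => eq_zero_of_norm_deriv_le_of_tendsto_exp_smul (D := ‖L‖ + C) (by linarith)
    (lt_add_one _) hsol (fun v hv B hB hxB => ?_) (hsmall _) ht
  refine ((L + M v).le_of_opNorm_le (norm_add_le_of_le le_rfl (hC v hv)) _).trans
    (mul_le_mul_of_nonneg_left ?_ hD)
  exact (ContinuousMap.norm_le _ hB).2 fun s => hxB _ (by linarith [s.2.2])

/-- Non-existence of super-exponentially small solutions at `-∞` for an
asymptotically autonomous linear functional differential system
`x'(t) = (L + M(t)) xₜ`, where `‖M(t)‖` is bounded on `(-∞,0]` and tends to `0`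
as `t → -∞`. -/
theorem no_small_solutions (n : ℕ) (h : ℝ) (hh : 0 ≤ h)
    (L : C(Set.Icc (-h) (0 : ℝ), Fin n → ℝ) →L[ℝ] (Fin n → ℝ))
    (M : ℝ → (C(Set.Icc (-h) (0 : ℝ), Fin n → ℝ) →L[ℝ] (Fin n → ℝ)))
    (hMbdd : ∃ C : ℝ, ∀ t ≤ (0 : ℝ), ‖M t‖ ≤ C)
    (hM0 : Filter.Tendsto (fun t => ‖M t‖) Filter.atBot (nhds 0))
    (x : ℝ → Fin n → ℝ) (hx : Continuous x)
    (hsol : ∀ t ≤ (0 : ℝ), HasDerivAt x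
      ((L + M t) (ContinuousMap.mk (fun s : Set.Icc (-h) (0 : ℝ) => x (t + (s : ℝ)))
        (hx.comp (continuous_const.add continuous_subtype_val)))) t)
    (hsmall : ∀ γ : ℝ,
      Filter.Tendsto (fun t => Real.exp (γ * t) • x t) Filter.atBot (nhds 0)) :
    ∀ t ≤ (0 : ℝ), x t = 0 :=
  no_small_solutions_general n h L M hMbdd x hx hsol hsmall
end

section
/- Let $c>0$, $\tau\ge 0$ and suppose the coefficient functions $a,b:\mathbb{R}\to\mathbb{R}$ are continuous with $b(t)\ne 0$ for all $t\ne 0$. If $w:\mathbb{R}\to\mathbb{R}$ is a $C^2$ solution of the advanced equation $w''(t)+cw'(t)+a(t)w(t)+b(t+c\tau)w(t+c\tau)=0$ and there exists $t'$ such that $w(t)=0$ for all $t\le t'$ (or $w(t)=0$ for all $t\ge t'$), then $w\equiv 0$ on $\mathbb{R}$. -/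
/-! Write `d = cτ ≥ 0`. If `d = 0` the equation is the linear ODE `w'' + cw' + (a + b)w = 0`,
and uniqueness for its Cauchy problem, started where `w` is locally zero, gives `w ≡ 0`.
If `d > 0`, the half-line on which `w` vanishes grows by `d` at each step. When `w = 0` on
`(-∞, s)`, the equation at `t - d` reduces to `b(t) w(t) = 0`, so `w = 0` on `(-∞, s + d)` away
from `t = 0`, and at `0` by continuity. When `w = 0` on `(s, ∞)`, the advanced term vanishes on
`(s - d, ∞)`, where `w` therefore solves `w'' + cw' + aw = 0` with zero data beyond `s`. -/

open Set Filter Topology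

theorem Set.EqOn.of_diff_singleton {X Y : Type*} [TopologicalSpace X] [TopologicalSpace Y]
    [T2Space Y] {f g : X → Y} {U : Set X} {x : X} [(𝓝[≠] x).NeBot] (hU : IsOpen U)
    (hf : Continuous f) (hg : Continuous g) (h : EqOn f g (U \ {x})) : EqOn f g U :=
  (h.closure hf hg).mono ((dense_compl_singleton x).open_subset_closure_inter hU)

theorem Filter.EventuallyEq.deriv_eventuallyEq_zero {𝕜 F : Type*} [NontriviallyNormedField 𝕜]
    [NormedAddCommGroup F] [NormedSpace 𝕜 F] {f : 𝕜 → F} {x : 𝕜} (h : f =ᶠ[𝓝 x] 0) :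
    deriv f =ᶠ[𝓝 x] 0 := by
  simpa only [deriv_zero] using h.deriv

theorem forall_of_forall_lt_step {p : ℝ → Prop} {d : ℝ} (hd : 0 < d)
    (hstep : ∀ s, (∀ t < s, p t) → ∀ t < s + d, p t) {s₀ : ℝ} (h₀ : ∀ t < s₀, p t)
    (t : ℝ) : p t := by
  have hn : ∀ n : ℕ, ∀ t < s₀ + n * d, p t := by
    intro n
    induction n with
    | zero => simpa using h₀
    | succ n ih => simpa [add_mul, add_assoc] using hstep _ ih
  obtain ⟨n, hn'⟩ := exists_nat_gt ((t - s₀) / d)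
  exact hn n t (by rw [div_lt_iff₀ hd] at hn'; linarith)

theorem forall_of_forall_gt_step {p : ℝ → Prop} {d : ℝ} (hd : 0 < d)
    (hstep : ∀ s, (∀ t > s, p t) → ∀ t > s - d, p t) {s₀ : ℝ} (h₀ : ∀ t > s₀, p t)
    (t : ℝ) : p t := by
  have hstep' : ∀ s, (∀ t < s, p (-t)) → ∀ t < s + d, p (-t) := fun s hs t ht =>
    hstep (-s) (fun u hu => neg_neg u ▸ hs (-u) (by linarith)) (-t) (by linarith)
  simpa using
    forall_of_forall_lt_step hd hstep' (s₀ := -s₀) (fun u hu => h₀ (-u) (by linarith)) (-t)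

theorem lipschitzWith_companion (c q : ℝ) :
    LipschitzWith (1 + ‖c‖₊ + ‖q‖₊) fun p : ℝ × ℝ => (p.2, -(c * p.2) - q * p.1) := by
  apply LipschitzWith.of_dist_le_mul
  intro p p'
  simp only [Prod.dist_eq, Real.dist_eq, NNReal.coe_add, NNReal.coe_one, coe_nnnorm,
    Real.norm_eq_abs]
  have h1 : |p.1 - p'.1| ≤ max |p.1 - p'.1| |p.2 - p'.2| := le_max_left _ _
  have h2 : |p.2 - p'.2| ≤ max |p.1 - p'.1| |p.2 - p'.2| := le_max_right _ _
  refine max_le (by nlinarith [abs_nonneg c, abs_nonneg q, abs_nonneg (p.1 - p'.1)]) ?_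
  calc |-(c * p.2) - q * p.1 - (-(c * p'.2) - q * p'.1)|
      = |c * (p.2 - p'.2) + q * (p.1 - p'.1)| := by rw [← abs_neg]; ring_nf
    _ ≤ |c| * |p.2 - p'.2| + |q| * |p.1 - p'.1| := by
      rw [← abs_mul, ← abs_mul]; exact abs_add_le _ _
    _ ≤ (1 + |c| + |q|) * max |p.1 - p'.1| |p.2 - p'.2| := by
      nlinarith [abs_nonneg c, abs_nonneg q, abs_nonneg (p.1 - p'.1)]

theorem eqOn_zero_of_linear_ode {q : ℝ → ℝ} {c A B t₀ : ℝ} {w : ℝ → ℝ}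
    (hq : ContinuousOn q (Icc A B)) (hw : Differentiable ℝ w) (hw' : Differentiable ℝ (deriv w))
    (heq : ∀ t ∈ Ioo A B, deriv (deriv w) t + c * deriv w t + q t * w t = 0)
    (ht₀ : t₀ ∈ Ioo A B) (hw₀ : w t₀ = 0) (hw₀' : deriv w t₀ = 0) :
    EqOn w 0 (Ioo A B) := by
  set v : ℝ → ℝ × ℝ → ℝ × ℝ := fun t p => (p.2, -(c * p.2) - q t * p.1)
  obtain ⟨M, hM⟩ := isCompact_Icc.exists_bound_of_continuousOn hq
  have hqM : ∀ t ∈ Ioo A B, ‖q t‖₊ ≤ M.toNNReal := fun t ht =>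
    NNReal.le_toNNReal_of_coe_le (hM t (Ioo_subset_Icc_self ht))
  have hlip : ∀ t ∈ Ioo A B, LipschitzOnWith (1 + ‖c‖₊ + M.toNNReal) (v t) univ := fun t ht =>
    ((lipschitzWith_companion c (q t)).weaken (by grw [hqM t ht])).lipschitzOnWith
  have hsol : ∀ t ∈ Ioo A B, HasDerivAt (fun t => (w t, deriv w t)) (v t (w t, deriv w t)) t ∧
      (w t, deriv w t) ∈ univ := fun t ht =>
    ⟨(hw t).hasDerivAt.prodMk (by convert (hw' t).hasDerivAt using 1; linarith [heq t ht]),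
      mem_univ _⟩
  have hzero : ∀ t ∈ Ioo A B,
      HasDerivAt (fun _ => (0 : ℝ × ℝ)) (v t 0) t ∧ (0 : ℝ × ℝ) ∈ univ := fun t _ =>
    ⟨(hasDerivAt_const t _).congr_deriv (by simp [v, Prod.zero_eq_mk]), mem_univ _⟩
  intro t ht
  exact congrArg Prod.fst
    (ODE_solution_unique_of_mem_Ioo hlip ht₀ hsol hzero (by simp [hw₀, hw₀']) ht)

theorem eq_zero_of_linear_ode_of_eventuallyEq_zero {q w : ℝ → ℝ} {c t₀ : ℝ}
    (hq : Continuous q) (hw : Differentiable ℝ w) (hw' : Differentiable ℝ (deriv w))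
    (heq : ∀ t, deriv (deriv w) t + c * deriv w t + q t * w t = 0) (h₀ : w =ᶠ[𝓝 t₀] 0)
    (t : ℝ) : w t = 0 :=
  eqOn_zero_of_linear_ode (A := min t t₀ - 1) (B := max t t₀ + 1) hq.continuousOn hw hw'
    (fun u _ => heq u) ⟨by grind, by grind⟩ h₀.eq_of_nhds
    h₀.deriv_eventuallyEq_zero.eq_of_nhds ⟨by grind, by grind⟩

section AdvancedEquation

variable {a b w : ℝ → ℝ} {c d : ℝ}

theorem forall_lt_add_of_forall_lt
    (heq : ∀ t, deriv (deriv w) t + c * deriv w t + a t * w t + b (t + d) * w (t + d) = 0)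
    (hw : Continuous w) (hbne : ∀ t, t ≠ 0 → b t ≠ 0) {s : ℝ}
    (hs : ∀ t < s, w t = 0) : ∀ t < s + d, w t = 0 := by
  have hoff : EqOn w 0 (Iio (s + d) \ {0}) := by
    rintro t ⟨ht, ht0 : t ≠ 0⟩
    have hloc : w =ᶠ[𝓝 (t - d)] 0 :=
      eventually_of_mem (Iio_mem_nhds (by linarith [mem_Iio.mp ht])) hs
    have := heq (t - d)
    rw [hloc.deriv_eventuallyEq_zero.deriv_eventuallyEq_zero.eq_of_nhds,
      hloc.deriv_eventuallyEq_zero.eq_of_nhds, hloc.eq_of_nhds, sub_add_cancel] at this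
    simpa [hbne t ht0] using this
  exact hoff.of_diff_singleton isOpen_Iio hw continuous_const

theorem forall_gt_sub_of_forall_gt
    (heq : ∀ t, deriv (deriv w) t + c * deriv w t + a t * w t + b (t + d) * w (t + d) = 0)
    (ha : Continuous a) (hw : Differentiable ℝ w)
    (hw' : Differentiable ℝ (deriv w)) {s : ℝ} (hs : ∀ t > s, w t = 0) :
    ∀ t > s - d, w t = 0 := by
  intro t ht
  set t₀ := max t (s + 1)
  have hloc : w =ᶠ[𝓝 t₀] 0 := eventually_of_mem (Ioi_mem_nhds (by grind)) hs
  refine eqOn_zero_of_linear_ode (q := a) (c := c) (A := s - d) (B := t₀ + 1) ha.continuousOn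
    hw hw' (fun u hu => ?_) ⟨by grind, by grind⟩ hloc.eq_of_nhds
    hloc.deriv_eventuallyEq_zero.eq_of_nhds ⟨ht, by grind⟩
  simpa [hs (u + d) (by linarith [hu.1])] using heq u

end AdvancedEquation

/-- If a solution `w` of the advanced (formally adjoint) equation
`w'' + cw' + a(t)w + b(t+cτ)w(t+cτ) = 0`, with `b(t) ≠ 0` for `t ≠ 0`, vanishes
on a half-line `(-∞, t']` or `[t', ∞)`, then `w ≡ 0`. -/
theorem adjoint_no_halfline_vanishing (a b : ℝ → ℝ) (c τ : ℝ)
    (hc : 0 < c) (hτ : 0 ≤ τ)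
    (hacont : Continuous a) (hbcont : Continuous b)
    (hbne : ∀ t : ℝ, t ≠ 0 → b t ≠ 0)
    (w : ℝ → ℝ) (hw : ContDiff ℝ 2 w)
    (heq : ∀ t, deriv (deriv w) t + c * deriv w t + a t * w t
      + b (t + c * τ) * w (t + c * τ) = 0)
    (hvanish : ∃ t' : ℝ, (∀ t ≤ t', w t = 0) ∨ (∀ t ≥ t', w t = 0)) :
    ∀ t, w t = 0 := by
  have hw₁ : Differentiable ℝ w := hw.differentiable (by norm_num)
  have hw₂ : Differentiable ℝ (deriv w) := hw.differentiable_deriv_two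
  obtain ⟨t', hv⟩ := hvanish
  rcases (mul_nonneg hc.le hτ).eq_or_lt with hd | hd
  · obtain ⟨t₀, h₀⟩ : ∃ t₀, w =ᶠ[𝓝 t₀] 0 := hv.elim
      (fun h => ⟨t' - 1, eventually_of_mem (Iic_mem_nhds (by linarith)) h⟩)
      (fun h => ⟨t' + 1, eventually_of_mem (Ici_mem_nhds (by linarith)) h⟩)
    exact eq_zero_of_linear_ode_of_eventuallyEq_zero (hacont.add hbcont) hw₁ hw₂
      (fun t => by simpa [← hd, add_mul, add_assoc] using heq t) h₀
  · rcases hv with h | h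
    · exact forall_of_forall_lt_step hd
        (fun _ => forall_lt_add_of_forall_lt heq hw₁.continuous hbne) (fun t ht => h t ht.le)
    · exact forall_of_forall_gt_step hd
        (fun _ => forall_gt_sub_of_forall_gt heq hacont hw₁ hw₂) (fun t ht => h t ht.le)
end

section
/- Let $a_-<0$, $b_-<0$. For $h>0$ define $\mathfrak{A}(c,h)=\frac{2+\sqrt{c^2h^2+4+4|a_-|h^2}}{e h^2|b_-|}$ and $\mathfrak{B}(c,h)=\exp\left(\frac{2+2|a_-|h^2}{ch+\sqrt{c^2h^2+4+4|a_-|h^2}}\right)$. For fixed $h>0$, the map $c\mapsto\mathfrak{A}(c,h)$ is strictly increasing to $+\infty$ on $[0,\infty)$ and $c\mapsto\mathfrak{B}(c,h)$ is decreasing on $[0,\infty)$. Consequently the equation $\mathfrak{A}(c,h)=\mathfrak{B}(c,h)$ has a unique nonnegative solution $c=c^{\mathfrak{E}}(h)$ if and only if $\mathfrak{A}(0,h)\le\mathfrak{B}(0,h)$. -/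
/-- Properties of the functions `𝔄(c,h)` and `𝔅(c,h)` defining the boundary
curve `c = c^𝔈(h)` of the domain `𝔇(a₋,b₋)`: for fixed `h > 0`, `𝔄(·,h)` is
strictly increasing to `+∞` on `[0,∞)`, `𝔅(·,h)` is decreasing on `[0,∞)`, and
the equation `𝔄(c,h) = 𝔅(c,h)` has a unique nonnegative solution iff
`𝔄(0,h) ≤ 𝔅(0,h)`. -/
theorem boundary_curve_unique (a b h : ℝ) (ha : a < 0) (hb : b < 0) (hh : 0 < h) :
    StrictMonoOn
      (fun c : ℝ => (2 + Real.sqrt (c ^ 2 * h ^ 2 + 4 + 4 * |a| * h ^ 2))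
        / (Real.exp 1 * h ^ 2 * |b|)) (Set.Ici 0) ∧
    Filter.Tendsto
      (fun c : ℝ => (2 + Real.sqrt (c ^ 2 * h ^ 2 + 4 + 4 * |a| * h ^ 2))
        / (Real.exp 1 * h ^ 2 * |b|)) Filter.atTop Filter.atTop ∧
    AntitoneOn
      (fun c : ℝ => Real.exp ((2 + 2 * |a| * h ^ 2)
        / (c * h + Real.sqrt (c ^ 2 * h ^ 2 + 4 + 4 * |a| * h ^ 2)))) (Set.Ici 0) ∧
    ((∃! c : ℝ, 0 ≤ c ∧
        (2 + Real.sqrt (c ^ 2 * h ^ 2 + 4 + 4 * |a| * h ^ 2))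
          / (Real.exp 1 * h ^ 2 * |b|)
        = Real.exp ((2 + 2 * |a| * h ^ 2)
          / (c * h + Real.sqrt (c ^ 2 * h ^ 2 + 4 + 4 * |a| * h ^ 2)))) ↔
      (2 + Real.sqrt (0 ^ 2 * h ^ 2 + 4 + 4 * |a| * h ^ 2))
          / (Real.exp 1 * h ^ 2 * |b|)
        ≤ Real.exp ((2 + 2 * |a| * h ^ 2)
          / (0 * h + Real.sqrt (0 ^ 2 * h ^ 2 + 4 + 4 * |a| * h ^ 2)))) := by
  have hbpos : 0 < |b| := abs_pos.mpr hb.ne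
  have hden : 0 < Real.exp 1 * h ^ 2 * |b| := by positivity
  have hsarg : ∀ c : ℝ, (0:ℝ) < c ^ 2 * h ^ 2 + 4 + 4 * |a| * h ^ 2 := fun c => by positivity
  have hspos : ∀ c : ℝ, 0 < Real.sqrt (c ^ 2 * h ^ 2 + 4 + 4 * |a| * h ^ 2) :=
    fun c => Real.sqrt_pos.mpr (hsarg c)
  have hdpos : ∀ c : ℝ, 0 ≤ c → 0 < c * h + Real.sqrt (c ^ 2 * h ^ 2 + 4 + 4 * |a| * h ^ 2) :=
    fun c hc => add_pos_of_nonneg_of_pos (mul_nonneg hc hh.le) (hspos c)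
  have hNpos : (0:ℝ) < 2 + 2 * |a| * h ^ 2 := by positivity
  set f : ℝ → ℝ := fun c => (2 + Real.sqrt (c ^ 2 * h ^ 2 + 4 + 4 * |a| * h ^ 2))
        / (Real.exp 1 * h ^ 2 * |b|) with hf
  set g : ℝ → ℝ := fun c => Real.exp ((2 + 2 * |a| * h ^ 2)
        / (c * h + Real.sqrt (c ^ 2 * h ^ 2 + 4 + 4 * |a| * h ^ 2))) with hg
  have monoF : StrictMonoOn f (Set.Ici 0) := by
    intro x hx y hy hxy
    have hx0 : (0:ℝ) ≤ x := hx
    have hsq : Real.sqrt (x ^ 2 * h ^ 2 + 4 + 4 * |a| * h ^ 2)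
        < Real.sqrt (y ^ 2 * h ^ 2 + 4 + 4 * |a| * h ^ 2) := by
      apply Real.sqrt_lt_sqrt (hsarg x).le
      nlinarith [mul_pos (mul_pos (sub_pos.mpr hxy) (show (0:ℝ) < y + x by linarith)) (show (0:ℝ) < h ^ 2 by positivity)]
    simp only [hf]
    gcongr
  have antiB : AntitoneOn g (Set.Ici 0) := by
    intro x hx y hy hxy
    have hx0 : (0:ℝ) ≤ x := hx
    have hsq : Real.sqrt (x ^ 2 * h ^ 2 + 4 + 4 * |a| * h ^ 2)
        ≤ Real.sqrt (y ^ 2 * h ^ 2 + 4 + 4 * |a| * h ^ 2) := by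
      apply Real.sqrt_le_sqrt
      nlinarith [mul_nonneg (mul_nonneg (sub_nonneg.mpr hxy) (show (0:ℝ) ≤ y + x by linarith)) (show (0:ℝ) ≤ h ^ 2 by positivity)]
    simp only [hg, Real.exp_le_exp]
    have hd : 0 < x * h + Real.sqrt (x ^ 2 * h ^ 2 + 4 + 4 * |a| * h ^ 2) := hdpos x hx0
    have hmul : x * h ≤ y * h := mul_le_mul_of_nonneg_right hxy hh.le
    exact div_le_div_of_nonneg_left hNpos.le hd (by linarith)
  have tendsF : Filter.Tendsto f Filter.atTop Filter.atTop := by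
    have h1 : Filter.Tendsto (fun c : ℝ => (2 + c * h) / (Real.exp 1 * h ^ 2 * |b|))
        Filter.atTop Filter.atTop := by
      apply Filter.Tendsto.atTop_div_const hden
      exact Filter.tendsto_atTop_add_const_left _ 2
        (Filter.Tendsto.atTop_mul_const hh Filter.tendsto_id)
    refine Filter.tendsto_atTop_mono' _ ?_ h1
    filter_upwards [Filter.eventually_ge_atTop (0:ℝ)] with c hc
    have hch : c * h ≤ Real.sqrt (c ^ 2 * h ^ 2 + 4 + 4 * |a| * h ^ 2) := by
      rw [show c * h = Real.sqrt ((c * h) ^ 2) from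
        (Real.sqrt_sq (mul_nonneg hc hh.le)).symm]
      apply Real.sqrt_le_sqrt
      have := abs_nonneg a
      nlinarith
    simp only [hf]
    gcongr
  have contf : Continuous f := by
    apply Continuous.div_const
    exact continuous_const.add (Continuous.sqrt (by continuity))
  have contg : ContinuousOn g (Set.Ici 0) := by
    apply Real.continuous_exp.comp_continuousOn
    apply ContinuousOn.div continuousOn_const
    · exact ((continuous_id.mul continuous_const).add (Continuous.sqrt (by continuity))).continuousOn
    · intro c hc
      exact (hdpos c hc).ne'
  have hFmono : StrictMonoOn (fun c => f c - g c) (Set.Ici 0) := by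
    intro x hx y hy hxy
    have h1 := monoF hx hy hxy
    have h2 := antiB hx hy hxy.le
    dsimp only
    linarith
  refine ⟨monoF, tendsF, antiB, ?_⟩
  show (∃! c : ℝ, 0 ≤ c ∧ f c = g c) ↔ f 0 ≤ g 0
  constructor
  · rintro ⟨c, ⟨hc0, hceq⟩, -⟩
    rcases eq_or_lt_of_le hc0 with hc | hc
    · rw [← hc] at hceq
      exact le_of_eq hceq
    · have h1 := monoF Set.self_mem_Ici (Set.mem_Ici.mpr hc0) hc
      have h2 := antiB Set.self_mem_Ici (Set.mem_Ici.mpr hc0) hc0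
      linarith
  · intro hle
    obtain ⟨M, hM⟩ := Filter.eventually_atTop.mp ((Filter.tendsto_atTop.mp tendsF) (g 0))
    have hM'0 : (0:ℝ) ≤ max M 0 := le_max_right _ _
    have hgM : g (max M 0) ≤ g 0 := antiB Set.self_mem_Ici (Set.mem_Ici.mpr hM'0) hM'0
    have hfM : g 0 ≤ f (max M 0) := hM _ (le_max_left _ _)
    have hcont : ContinuousOn (fun c => f c - g c) (Set.Icc 0 (max M 0)) :=
      (contf.continuousOn.sub (contg.mono (Set.Icc_subset_Ici_self)))
    have h0mem : (0:ℝ) ∈ Set.Icc ((fun c => f c - g c) 0) ((fun c => f c - g c) (max M 0)) := by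
      constructor <;> dsimp only <;> linarith
    obtain ⟨c, hcmem, hceq⟩ := intermediate_value_Icc hM'0 hcont h0mem
    have hceq' : f c = g c := by
      have : f c - g c = 0 := hceq
      linarith
    refine ⟨c, ⟨hcmem.1, hceq'⟩, ?_⟩
    rintro y ⟨hy0, hyeq⟩
    apply hFmono.injOn (Set.mem_Ici.mpr hy0) (Set.mem_Ici.mpr hcmem.1)
    dsimp only
    rw [hyeq, hceq']
    ring
end
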